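/- arXiv:2002.07049 — 2 statements merged into one kernel-verified Lean document; each statement's English description precedes it below -/
import Mathlib

section
/- Let S = {s_1, …, s_n} with 0 < s_1 < s_2 < … < s_n real numbers, n ≥ 1, and M = 1 + s_n. Let A be the two-clock timed automaton with additive constraints over Σ = {♦, ♠} described in the context, and let u = 2(M − s_n) ♦ 2(s_n − s_{n−1}) ♦ … ♦ 2(s_2 − s_1) ♦ 2s_1. Then the set of clock valuations ν such that some run of A on the timed word u ♠ u ♠ starts in the configuration (p_1, (x = 0, y = 0)) and ends in a configuration (r_1, ν) is exactly {(x = 2a + 2M, y = 2b) : a, b ∈ S}. -/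
/-- Clock conditions with additive constraints:
`γ ::= true | x < c | x > c | x = c | (Σ_{x∈Z} x) ∼ c | γ ∧ γ | γ ∨ γ`. -/
inductive ACond (X : Type) where
  | tt : ACond X
  | lt : X → ℝ → ACond X
  | gt : X → ℝ → ACond X
  | eq : X → ℝ → ACond X
  | sumLt : Finset X → ℝ → ACond X
  | sumGt : Finset X → ℝ → ACond X
  | sumEq : Finset X → ℝ → ACond X
  | conj : ACond X → ACond X → ACond X
  | disj : ACond X → ACond X → ACond X

/-- Satisfaction of an additive clock condition by a clock valuation. -/
def ACond.sat {X : Type} (ν : X → ℝ) : ACond X → Prop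
  | .tt => True
  | .lt x c => ν x < c
  | .gt x c => ν x > c
  | .eq x c => ν x = c
  | .sumLt Z c => ∑ x ∈ Z, ν x < c
  | .sumGt Z c => ∑ x ∈ Z, ν x > c
  | .sumEq Z c => ∑ x ∈ Z, ν x = c
  | .conj γ₁ γ₂ => γ₁.sat ν ∧ γ₂.sat ν
  | .disj γ₁ γ₂ => γ₁.sat ν ∨ γ₂.sat ν

/-- A timed automaton with additive constraints. -/
structure ATA (A Q X : Type) where
  I : Set Q
  E : Set (Q × A × ACond X × Q × Set X)
  F : Set Q

/-- One step of a timed automaton with additive constraints on a stream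
element. -/
def ATA.Step {A Q X : Type} (M : ATA A Q X) (e : A ⊕ ℝ)
    (c c' : Q × (X → ℝ)) : Prop :=
  match e with
  | .inr r => c'.1 = c.1 ∧ ∀ x, c'.2 x = c.2 x + r
  | .inl a => ∃ γ Z, (c.1, a, γ, c'.1, Z) ∈ M.E ∧ γ.sat c.2 ∧
      (∀ x ∈ Z, c'.2 x = 0) ∧ (∀ x ∉ Z, c'.2 x = c.2 x)

/-- A run of a timed automaton with additive constraints on a timed word. -/
inductive ATA.RunFrom {A Q X : Type} (M : ATA A Q X) :
    List (A ⊕ ℝ) → (Q × (X → ℝ)) → (Q × (X → ℝ)) → Prop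
  | nil (c) : M.RunFrom [] c c
  | cons {e w c c' c''} : M.Step e c c' → M.RunFrom w c' c'' →
      M.RunFrom (e :: w) c c''

/-- Acceptance of a timed word. -/
def ATA.Accepts {A Q X : Type} (M : ATA A Q X) (w : List (A ⊕ ℝ)) : Prop :=
  ∃ q₀ ∈ M.I, ∃ c' : Q × (X → ℝ), M.RunFrom w (q₀, fun _ => 0) c' ∧ c'.1 ∈ M.F

/-- The two-letter alphabet `{♦, ♠}`. -/
inductive Sig where
  | dia : Sig
  | spade : Sig

/-- The states of the 3SUM automaton. -/
inductive St where
  | p1 : St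
  | p2 : St
  | q1 : St
  | q2 : St
  | r1 : St
  | r2 : St

/-- The transitions of the 3SUM automaton, over clocks `Bool` with
`x = false` and `y = true`. -/
def threeSumE (M : ℝ) : Set (St × Sig × ACond Bool × St × Set Bool) :=
  {(St.p1, Sig.dia, ACond.tt, St.p1, (∅ : Set Bool)),
   (St.p1, Sig.dia, ACond.tt, St.p2, ({false} : Set Bool)),
   (St.p2, Sig.dia, ACond.tt, St.p2, (∅ : Set Bool)),
   (St.p2, Sig.spade, ACond.tt, St.q1, ({true} : Set Bool)),
   (St.q1, Sig.dia, ACond.tt, St.q1, (∅ : Set Bool)),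
   (St.q1, Sig.dia, ACond.tt, St.q2, ({true} : Set Bool)),
   (St.q2, Sig.dia, ACond.tt, St.q2, (∅ : Set Bool)),
   (St.q2, Sig.spade, ACond.tt, St.r1, (∅ : Set Bool)),
   (St.r1, Sig.dia, ACond.tt, St.r1, (∅ : Set Bool)),
   (St.r1, Sig.dia, ACond.sumEq Finset.univ (4 * M), St.r2, (∅ : Set Bool)),
   (St.r2, Sig.dia, ACond.tt, St.r2, (∅ : Set Bool))}

/-- The 3SUM automaton with parameter `M`: initial state `p₁`, final state
`r₂`. -/
def threeSumAut (M : ℝ) : ATA Sig St Bool :=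
  ⟨{St.p1}, threeSumE M, {St.r2}⟩

/-- The timed word `2(prev − s_n) ♦ 2(s_n − s_{n−1}) ♦ … ♦ 2(s_2 − s_1) ♦ 2s_1`
built from the descending list `[s_n, …, s_1]` and the starting value
`prev`. -/
def uFrom (prev : ℝ) : List ℝ → List (Sig ⊕ ℝ)
  | [] => [Sum.inr (2 * prev)]
  | s :: rest => Sum.inr (2 * (prev - s)) :: Sum.inl Sig.dia :: uFrom s rest

/-- The timed word `(prev − s_n) ♦ (s_n − s_{n−1}) ♦ … ♦ (s_2 − s_1) ♦` built
from the descending list `[s_n, …, s_1]` and the starting value `prev`. -/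
def vFrom (prev : ℝ) : List ℝ → List (Sig ⊕ ℝ)
  | [] => []
  | s :: rest => Sum.inr (prev - s) :: Sum.inl Sig.dia :: vFrom s rest

/-!
Reading `u`, the automaton in `p₁` (resp. `q₁`) may, at each `♦`, either stay or move to `p₂`
(resp. `q₂`) resetting `x` (resp. `y`), after which it ignores every `♦`. The delays of `u`
telescope: the `♦` read after the delay ending in `s` is followed by delays of total `2 s`, so a
reset there leaves the clock at `2 s` at the end of `u`, while an untouched clock grows by the
whole duration `2 M`. The two `♠` transitions force one reset in each copy of `u` and reset `y`
in between.
-/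

theorem Set.indicator_compl_singleton {X N : Type} [DecidableEq X] [Zero N] (ν : X → N) (z : X) :
    ({z}ᶜ : Set X).indicator ν = Function.update ν z 0 := by
  funext x
  by_cases hx : x = z <;> simp [hx]

namespace ATA

section Runs

variable {A Q X : Type} (M : ATA A Q X)

theorem runFrom_nil_iff {c c' : Q × (X → ℝ)} : M.RunFrom [] c c' ↔ c' = c := by
  constructor
  · rintro ⟨⟩
    rfl
  · rintro rfl
    exact .nil _

theorem runFrom_cons_iff {e : A ⊕ ℝ} {w : List (A ⊕ ℝ)} {c c'' : Q × (X → ℝ)} :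
    M.RunFrom (e :: w) c c'' ↔ ∃ c', M.Step e c c' ∧ M.RunFrom w c' c'' := by
  constructor
  · rintro ⟨⟩
    exact ⟨_, ‹_›, ‹_›⟩
  · rintro ⟨c', hs, hr⟩
    exact .cons hs hr

theorem runFrom_append_iff {w₁ w₂ : List (A ⊕ ℝ)} {c c'' : Q × (X → ℝ)} :
    M.RunFrom (w₁ ++ w₂) c c'' ↔ ∃ c', M.RunFrom w₁ c c' ∧ M.RunFrom w₂ c' c'' := by
  induction w₁ generalizing c with
  | nil => simp [runFrom_nil_iff]
  | cons e w ih =>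
    simp only [List.cons_append, runFrom_cons_iff, ih]
    exact ⟨fun ⟨c₁, hs, c₂, hr₁, hr₂⟩ => ⟨c₂, ⟨c₁, hs, hr₁⟩, hr₂⟩,
      fun ⟨c₂, ⟨c₁, hs, hr₁⟩, hr₂⟩ => ⟨c₁, hs, c₂, hr₁, hr₂⟩⟩

theorem runFrom_append_singleton_iff {w : List (A ⊕ ℝ)} {e : A ⊕ ℝ} {c c'' : Q × (X → ℝ)} :
    M.RunFrom (w ++ [e]) c c'' ↔ ∃ c', M.RunFrom w c c' ∧ M.Step e c' c'' := by
  simp [runFrom_append_iff, runFrom_cons_iff, runFrom_nil_iff]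

theorem step_delay_iff {r : ℝ} {c c' : Q × (X → ℝ)} :
    M.Step (.inr r) c c' ↔ c' = (c.1, fun x => c.2 x + r) := by
  simp [Step, Prod.ext_iff, funext_iff]

theorem runFrom_delay_cons_iff {r : ℝ} {w : List (A ⊕ ℝ)} {c c'' : Q × (X → ℝ)} :
    M.RunFrom (.inr r :: w) c c'' ↔ M.RunFrom w (c.1, fun x => c.2 x + r) c'' := by
  simp [runFrom_cons_iff, step_delay_iff]

theorem step_letter_iff {a : A} {q q' : Q} {ν ν' : X → ℝ} :
    M.Step (.inl a) (q, ν) (q', ν') ↔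
      ∃ γ Z, (q, a, γ, q', Z) ∈ M.E ∧ γ.sat ν ∧ ν' = Zᶜ.indicator ν := by
  simp only [Step]
  refine exists₂_congr fun γ Z => and_congr_right' (and_congr_right' ?_)
  constructor
  · rintro ⟨hZ, hZc⟩
    funext x
    by_cases hx : x ∈ Z <;> simp [hx, hZ, hZc]
  · rintro rfl
    exact ⟨fun x hx => by simp [hx], fun x hx => by simp [hx]⟩

end Runs

section Phases

variable {Q X : Type} (M : ATA Sig Q X)

def IdleOnDia (q : Q) : Prop :=
  ∀ γ q' Z, (q, Sig.dia, γ, q', Z) ∈ M.E ↔ γ = .tt ∧ q' = q ∧ Z = ∅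

def ResetsOnDia (q q' : Q) (z : X) : Prop :=
  ∀ γ q'' Z, (q, Sig.dia, γ, q'', Z) ∈ M.E ↔
    γ = .tt ∧ (q'' = q ∧ Z = ∅ ∨ q'' = q' ∧ Z = {z})

theorem delay_sub_add_delay (ν : X → ℝ) (prev s : ℝ) :
    (fun x => ν x + 2 * (prev - s) + 2 * s) = fun x => ν x + 2 * prev := by
  funext x
  ring

theorem reset_add_delay [DecidableEq X] (ν : X → ℝ) (z : X) (prev s : ℝ) :
    (fun x => ({z}ᶜ : Set X).indicator (fun x => ν x + 2 * (prev - s)) x + 2 * s) =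
      Function.update (fun x => ν x + 2 * prev) z (2 * s) := by
  funext x
  by_cases hx : x = z
  · simp [hx]
  · simp [hx]
    ring

theorem runFrom_uFrom_iff_of_idleOnDia {q : Q} (hq : M.IdleOnDia q) (l : List ℝ)
    (prev : ℝ) (ν : X → ℝ) (c : Q × (X → ℝ)) :
    M.RunFrom (uFrom prev l) (q, ν) c ↔ c = (q, fun x => ν x + 2 * prev) := by
  induction l generalizing prev ν with
  | nil => simp [uFrom, runFrom_delay_cons_iff, runFrom_nil_iff]
  | cons s rest ih =>
    rw [uFrom, runFrom_delay_cons_iff, runFrom_cons_iff]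
    simp only [IdleOnDia] at hq
    simp [step_letter_iff, hq, ACond.sat, ih, delay_sub_add_delay]

theorem runFrom_uFrom_iff_of_resetsOnDia [DecidableEq X] {q q' : Q} {z : X}
    (hq : M.ResetsOnDia q q' z) (hq' : M.IdleOnDia q') (l : List ℝ)
    (prev : ℝ) (ν : X → ℝ) (c : Q × (X → ℝ)) :
    M.RunFrom (uFrom prev l) (q, ν) c ↔ c = (q, fun x => ν x + 2 * prev) ∨
      ∃ a ∈ l, c = (q', Function.update (fun x => ν x + 2 * prev) z (2 * a)) := by
  induction l generalizing prev ν with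
  | nil => simp [uFrom, runFrom_delay_cons_iff, runFrom_nil_iff]
  | cons s rest ih =>
    rw [uFrom, runFrom_delay_cons_iff, runFrom_cons_iff]
    simp only [ResetsOnDia] at hq
    simp only [Prod.exists, step_letter_iff, hq, ↓existsAndEq, true_and, ACond.sat, or_and_right,
      exists_or, and_true, Set.compl_empty, Set.indicator_univ, ih, delay_sub_add_delay,
      runFrom_uFrom_iff_of_idleOnDia M hq', reset_add_delay, List.mem_cons]
    simp only [or_comm, or_left_comm]

end Phases

end ATA

namespace threeSumAut

open St ATA Function

variable (M : ℝ)

theorem resetsOnDia_p1 : (threeSumAut M).ResetsOnDia p1 p2 false := by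
  intro γ q Z
  simp only [threeSumAut, threeSumE, Set.mem_insert_iff, Prod.mk.injEq, true_and, reduceCtorEq,
    false_and, and_self, Set.mem_singleton_iff, or_self, or_false]
  tauto

theorem idleOnDia_p2 : (threeSumAut M).IdleOnDia p2 := by
  intro γ q Z
  simp [threeSumAut, threeSumE]

theorem resetsOnDia_q1 : (threeSumAut M).ResetsOnDia q1 q2 true := by
  intro γ q Z
  simp only [threeSumAut, threeSumE, Set.mem_insert_iff, Prod.mk.injEq, reduceCtorEq, true_and,
    false_and, and_self, Set.mem_singleton_iff, or_self, or_false, false_or]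
  tauto

theorem idleOnDia_q2 : (threeSumAut M).IdleOnDia q2 := by
  intro γ q Z
  simp [threeSumAut, threeSumE]

theorem step_spade_iff {q : St} {ν : Bool → ℝ} {c : St × (Bool → ℝ)} :
    (threeSumAut M).Step (.inl .spade) (q, ν) c ↔
      q = p2 ∧ c = (q1, update ν true 0) ∨ q = q2 ∧ c = (r1, ν) := by
  obtain ⟨q', ν'⟩ := c
  simp [step_letter_iff, threeSumAut, threeSumE, ACond.sat, or_and_right, exists_or,
    Set.indicator_compl_singleton, -Bool.compl_singleton, -Bool.univ_eq, and_assoc]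

theorem runFrom_p1 (P : ℝ) (l : List ℝ) (ν : Bool → ℝ) (c : St × (Bool → ℝ)) :
    (threeSumAut M).RunFrom (uFrom P l ++ [.inl .spade]) (p1, ν) c ↔
      ∃ a ∈ l, c = (q1, update (update (fun x => ν x + 2 * P) false (2 * a)) true 0) := by
  simp [runFrom_append_singleton_iff,
    runFrom_uFrom_iff_of_resetsOnDia _ (resetsOnDia_p1 M) (idleOnDia_p2 M), step_spade_iff]

theorem runFrom_q1 (P : ℝ) (l : List ℝ) (ν : Bool → ℝ) (c : St × (Bool → ℝ)) :
    (threeSumAut M).RunFrom (uFrom P l ++ [.inl .spade]) (q1, ν) c ↔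
      ∃ b ∈ l, c = (r1, update (fun x => ν x + 2 * P) true (2 * b)) := by
  simp [runFrom_append_singleton_iff,
    runFrom_uFrom_iff_of_resetsOnDia _ (resetsOnDia_q1 M) (idleOnDia_q2 M), step_spade_iff]

theorem runFrom_uu_iff (P : ℝ) (l : List ℝ) (ν₀ ν : Bool → ℝ) :
    (threeSumAut M).RunFrom
        (uFrom P l ++ [.inl .spade] ++ uFrom P l ++ [.inl .spade]) (p1, ν₀) (r1, ν) ↔
      ∃ a ∈ l, ∃ b ∈ l, ν false = 2 * a + 2 * P ∧ ν true = 2 * b := by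
  rw [List.append_assoc (uFrom P l ++ _), runFrom_append_iff]
  simp only [runFrom_p1, Prod.exists, Prod.mk.injEq, ↓existsAndEq, and_true, runFrom_q1, true_and]
  simp [funext_iff, Bool.forall_bool]

end threeSumAut

theorem stmt15_general (l : List ℝ) (hne : l ≠ []) :
    {ν : Bool → ℝ |
        (threeSumAut (1 + l.getLast hne)).RunFrom
          (uFrom (1 + l.getLast hne) l.reverse ++ [Sum.inl Sig.spade] ++
            uFrom (1 + l.getLast hne) l.reverse ++ [Sum.inl Sig.spade])
          (St.p1, fun _ => 0) (St.r1, ν)} =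
      {ν : Bool → ℝ | ∃ a ∈ l, ∃ b ∈ l,
        ν false = 2 * a + 2 * (1 + l.getLast hne) ∧ ν true = 2 * b} := by
  ext ν
  simpa using threeSumAut.runFrom_uu_iff _ _ l.reverse _ ν

/-- For `S = {s_1 < … < s_n}` (positive reals, given as the sorted list `l`),
`M = 1 + s_n`, and `u = 2(M − s_n) ♦ … ♦ 2(s_2 − s_1) ♦ 2s_1`, the clock
valuations reachable from `(p₁, (0, 0))` at state `r₁` by a run of the 3SUM
automaton on `u ♠ u ♠` are exactly `{(x = 2a + 2M, y = 2b) : a, b ∈ S}`. -/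
theorem stmt15 (l : List ℝ) (hne : l ≠ []) (hsort : l.Pairwise (· < ·))
    (hpos : ∀ x ∈ l, 0 < x) :
    {ν : Bool → ℝ |
        (threeSumAut (1 + l.getLast hne)).RunFrom
          (uFrom (1 + l.getLast hne) l.reverse ++ [Sum.inl Sig.spade] ++
            uFrom (1 + l.getLast hne) l.reverse ++ [Sum.inl Sig.spade])
          (St.p1, fun _ => 0) (St.r1, ν)} =
      {ν : Bool → ℝ | ∃ a ∈ l, ∃ b ∈ l,
        ν false = 2 * a + 2 * (1 + l.getLast hne) ∧ ν true = 2 * b} :=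
  stmt15_general l hne
end

section
/- Let S = {s_1, …, s_n} with 0 < s_1 < s_2 < … < s_n real numbers, n ≥ 1, and M = 1 + s_n. Let A be the two-clock timed automaton with additive constraints over Σ = {♦, ♠} described in the context, and define the timed words u = 2(M − s_n) ♦ 2(s_n − s_{n−1}) ♦ … ♦ 2(s_2 − s_1) ♦ 2s_1, v = (M − s_n) ♦ (s_n − s_{n−1}) ♦ … ♦ (s_2 − s_1) ♦, and w = u ♠ u ♠ v. Then A accepts w if and only if there exist a, b, c ∈ S satisfying a + b = c. (This is the correctness of the reduction from 3SUM to the acceptance problem for two-clock timed automata with additive constraints.) -/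
section Aux

open St Sig

lemma runFrom_append {A Q X : Type} (M : ATA A Q X) :
    ∀ (w1 : List (A ⊕ ℝ)) {w2 : List (A ⊕ ℝ)} {c c'' : Q × (X → ℝ)},
      M.RunFrom (w1 ++ w2) c c'' ↔ ∃ c', M.RunFrom w1 c c' ∧ M.RunFrom w2 c' c''
  | [], w2, c, c'' => by
      constructor
      · intro h; exact ⟨c, .nil c, h⟩
      · rintro ⟨c', h1, h2⟩; cases h1; exact h2
  | e :: w1, w2, c, c'' => by
      constructor
      · intro h
        cases h with
        | cons hs hr =>
          obtain ⟨c', h1, h2⟩ := (runFrom_append M w1).mp hr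
          exact ⟨c', .cons hs h1, h2⟩
      · rintro ⟨c', h1, h2⟩
        cases h1 with
        | cons hs hr => exact .cons hs ((runFrom_append M w1).mpr ⟨_, hr, h2⟩)

lemma delay_step {M : ℝ} (q : St) (ν : Bool → ℝ) (r : ℝ) :
    (threeSumAut M).Step (.inr r) (q, ν) (q, fun b => ν b + r) :=
  ⟨rfl, fun _ => rfl⟩

lemma loop_diaStep {M : ℝ} {q : St}
    (h : (q, dia, ACond.tt, q, (∅ : Set Bool)) ∈ threeSumE M) (ν : Bool → ℝ) :
    (threeSumAut M).Step (.inl dia) (q, ν) (q, ν) :=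
  ⟨ACond.tt, ∅, h, trivial, fun _ hx => hx.elim, fun _ _ => rfl⟩

lemma u_run_loop {M : ℝ} {q : St}
    (h : (q, dia, ACond.tt, q, (∅ : Set Bool)) ∈ threeSumE M) :
    ∀ (L : List ℝ) (prev : ℝ) (ν : Bool → ℝ),
      (threeSumAut M).RunFrom (uFrom prev L) (q, ν) (q, fun b => ν b + 2 * prev)
  | [], prev, ν => .cons (delay_step q ν (2 * prev)) (.nil _)
  | s :: rest, prev, ν => by
      have ih := u_run_loop h rest s (fun b => ν b + 2 * (prev - s))
      have he : (fun b => (ν b + 2 * (prev - s)) + 2 * s) = fun b => ν b + 2 * prev := by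
        funext b; ring
      rw [he] at ih
      exact .cons (delay_step q ν (2 * (prev - s))) (.cons (loop_diaStep h _) ih)

lemma v_run_loop {M : ℝ} {q : St}
    (h : (q, dia, ACond.tt, q, (∅ : Set Bool)) ∈ threeSumE M) :
    ∀ (L : List ℝ) (prev : ℝ) (ν : Bool → ℝ),
      ∃ ν', (threeSumAut M).RunFrom (vFrom prev L) (q, ν) (q, ν')
  | [], prev, ν => ⟨ν, .nil _⟩
  | s :: rest, prev, ν => by
      obtain ⟨ν', hr⟩ := v_run_loop h rest s (fun b => ν b + (prev - s))
      exact ⟨ν', .cons (delay_step q ν (prev - s)) (.cons (loop_diaStep h _) hr)⟩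

lemma u_run_reset {M : ℝ} {q q' : St} {clk : Bool}
    (h1 : (q, dia, ACond.tt, q, (∅ : Set Bool)) ∈ threeSumE M)
    (h2 : (q, dia, ACond.tt, q', ({clk} : Set Bool)) ∈ threeSumE M)
    (h3 : (q', dia, ACond.tt, q', (∅ : Set Bool)) ∈ threeSumE M)
    (L : List ℝ) :
    ∀ (prev : ℝ) (ν : Bool → ℝ) (a : ℝ), a ∈ L →
      (threeSumAut M).RunFrom (uFrom prev L) (q, ν)
        (q', fun b => if b = clk then 2 * a else ν b + 2 * prev) := by
  induction L with
  | nil => intro _ _ _ ha; cases ha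
  | cons s rest ih =>
    intro prev ν a ha
    rcases List.mem_cons.mp ha with rfl | ha
    · -- reset now
      have step2 : (threeSumAut M).Step (.inl dia) (q, fun b => ν b + 2 * (prev - a))
          (q', fun b => if b = clk then 0 else ν b + 2 * (prev - a)) := by
        refine ⟨ACond.tt, {clk}, h2, trivial, ?_, ?_⟩
        · intro x hx
          rw [Set.mem_singleton_iff] at hx
          simp [hx]
        · intro x hx
          rw [Set.mem_singleton_iff] at hx
          simp [hx]
      have ih2 := u_run_loop h3 rest a (fun b => if b = clk then 0 else ν b + 2 * (prev - a))
      have he : (fun b => (if b = clk then 0 else ν b + 2 * (prev - a)) + 2 * a)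
          = fun b => if b = clk then 2 * a else ν b + 2 * prev := by
        funext b; by_cases hb : b = clk <;> simp [hb] <;> ring
      rw [he] at ih2
      exact .cons (delay_step q ν (2 * (prev - a))) (.cons step2 ih2)
    · have ihr := ih s (fun b => ν b + 2 * (prev - s)) a ha
      have he : (fun b => if b = clk then 2 * a else (ν b + 2 * (prev - s)) + 2 * s)
          = fun b => if b = clk then 2 * a else ν b + 2 * prev := by
        funext b; by_cases hb : b = clk <;> simp [hb] <;> ring
      rw [he] at ihr
      exact .cons (delay_step q ν (2 * (prev - s))) (.cons (loop_diaStep h1 _) ihr)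

lemma v_run_check {M : ℝ} (L : List ℝ) :
    ∀ (prev : ℝ) (ν : Bool → ℝ) (c : ℝ), c ∈ L →
      ν false + ν true + 2 * (prev - c) = 4 * M →
      ∃ ν', (threeSumAut M).RunFrom (vFrom prev L) (r1, ν) (r2, ν') := by
  induction L with
  | nil => intro _ _ _ hc; cases hc
  | cons s rest ih =>
    intro prev ν c hc hsum
    have hr1 : (r1, dia, ACond.tt, r1, (∅ : Set Bool)) ∈ threeSumE M := by
      simp [threeSumE]
    rcases List.mem_cons.mp hc with rfl | hc
    · -- check now
      have step2 : (threeSumAut M).Step (.inl dia) (r1, fun b => ν b + (prev - c))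
          (r2, fun b => ν b + (prev - c)) := by
        refine ⟨ACond.sumEq Finset.univ (4 * M), ∅, by simp [threeSumAut, threeSumE], ?_,
          fun _ hx => hx.elim, fun _ _ => rfl⟩
        show ∑ x : Bool, (ν x + (prev - c)) = 4 * M
        rw [Fintype.sum_bool]
        linarith
      have hr2 : (r2, dia, ACond.tt, r2, (∅ : Set Bool)) ∈ threeSumE M := by
        simp [threeSumE]
      obtain ⟨ν', hrest⟩ := v_run_loop hr2 rest c (fun b => ν b + (prev - c))
      exact ⟨ν', .cons (delay_step r1 ν (prev - c)) (.cons step2 hrest)⟩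
    · obtain ⟨ν', hrest⟩ := ih s (fun b => ν b + (prev - s)) c hc (by
        show ν false + (prev - s) + (ν true + (prev - s)) + 2 * (s - c) = 4 * M
        linarith)
      exact ⟨ν', .cons (delay_step r1 ν (prev - s)) (.cons (loop_diaStep hr1 _) hrest)⟩

lemma loop_inv_u {M : ℝ} {q : St}
    (hq : ∀ ⦃γ : ACond Bool⦄ ⦃Z : Set Bool⦄ ⦃q'' : St⦄,
      (q, dia, γ, q'', Z) ∈ threeSumE M → q'' = q ∧ Z = (∅ : Set Bool))
    (L : List ℝ) :
    ∀ (prev : ℝ) (ν : Bool → ℝ) (c' : St × (Bool → ℝ)),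
      (threeSumAut M).RunFrom (uFrom prev L) (q, ν) c' →
      c'.1 = q ∧ ∀ b, c'.2 b = ν b + 2 * prev := by
  induction L with
  | nil =>
    intro prev ν c' hrun
    rw [show uFrom prev [] = [Sum.inr (2 * prev)] from rfl] at hrun
    cases hrun with
    | cons hs hr =>
      cases hr
      exact ⟨hs.1, hs.2⟩
  | cons s rest ih =>
    intro prev ν c' hrun
    rw [show uFrom prev (s :: rest)
        = Sum.inr (2 * (prev - s)) :: Sum.inl dia :: uFrom s rest from rfl] at hrun
    cases hrun with
    | cons hs1 hr1 =>
      cases hr1 with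
      | cons hs2 hr2 =>
        rename_i c1 c2
        obtain ⟨s1, ν1⟩ := c1
        obtain ⟨hq1, hν1⟩ := hs1
        simp only at hq1 hν1
        subst hq1
        obtain ⟨s2, ν2⟩ := c2
        obtain ⟨γ, Z, hE, _, hZ, hnZ⟩ := hs2
        simp only at hE hZ hnZ
        obtain ⟨hq2, hZe⟩ := hq hE
        subst hq2; subst hZe
        obtain ⟨hc1, hc2⟩ := ih s ν2 c' hr2
        refine ⟨hc1, fun b => ?_⟩
        rw [hc2 b, hnZ b (Set.notMem_empty b), hν1 b]
        ring

lemma loop_inv_v {M : ℝ} {q : St}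
    (hq : ∀ ⦃γ : ACond Bool⦄ ⦃Z : Set Bool⦄ ⦃q'' : St⦄,
      (q, dia, γ, q'', Z) ∈ threeSumE M → q'' = q ∧ Z = (∅ : Set Bool))
    (L : List ℝ) :
    ∀ (prev : ℝ) (ν : Bool → ℝ) (c' : St × (Bool → ℝ)),
      (threeSumAut M).RunFrom (vFrom prev L) (q, ν) c' → c'.1 = q := by
  induction L with
  | nil =>
    intro prev ν c' hrun
    cases hrun; rfl
  | cons s rest ih =>
    intro prev ν c' hrun
    cases hrun with
    | cons hs1 hr1 =>
      cases hr1 with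
      | cons hs2 hr2 =>
        rename_i c1 c2
        obtain ⟨s1, ν1⟩ := c1
        obtain ⟨hq1, hν1⟩ := hs1
        simp only at hq1
        subst hq1
        obtain ⟨s2, ν2⟩ := c2
        obtain ⟨γ, Z, hE, _, hZ, hnZ⟩ := hs2
        simp only at hE
        obtain ⟨hq2, _⟩ := hq hE
        subst hq2
        exact ih s ν2 c' hr2

lemma u_inv {M : ℝ} {q q' : St} {clk : Bool}
    (hq : ∀ ⦃γ : ACond Bool⦄ ⦃Z : Set Bool⦄ ⦃q'' : St⦄,
      (q, dia, γ, q'', Z) ∈ threeSumE M →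
        (q'' = q ∧ Z = (∅ : Set Bool)) ∨ (q'' = q' ∧ Z = ({clk} : Set Bool)))
    (hq' : ∀ ⦃γ : ACond Bool⦄ ⦃Z : Set Bool⦄ ⦃q'' : St⦄,
      (q', dia, γ, q'', Z) ∈ threeSumE M → q'' = q' ∧ Z = (∅ : Set Bool))
    (L : List ℝ) :
    ∀ (prev : ℝ) (ν : Bool → ℝ) (c' : St × (Bool → ℝ)),
      (threeSumAut M).RunFrom (uFrom prev L) (q, ν) c' →
      (c'.1 = q ∧ ∀ b, c'.2 b = ν b + 2 * prev) ∨
      (∃ a ∈ L, c'.1 = q' ∧ c'.2 clk = 2 * a ∧ c'.2 (!clk) = ν (!clk) + 2 * prev) := by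
  induction L with
  | nil =>
    intro prev ν c' hrun
    rw [show uFrom prev [] = [Sum.inr (2 * prev)] from rfl] at hrun
    cases hrun with
    | cons hs hr =>
      cases hr
      exact Or.inl ⟨hs.1, hs.2⟩
  | cons s rest ih =>
    intro prev ν c' hrun
    rw [show uFrom prev (s :: rest)
        = Sum.inr (2 * (prev - s)) :: Sum.inl dia :: uFrom s rest from rfl] at hrun
    cases hrun with
    | cons hs1 hr1 =>
      cases hr1 with
      | cons hs2 hr2 =>
        rename_i c1 c2
        obtain ⟨s1, ν1⟩ := c1
        obtain ⟨hq1, hν1⟩ := hs1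
        simp only at hq1 hν1
        subst hq1
        obtain ⟨s2, ν2⟩ := c2
        obtain ⟨γ, Z, hE, _, hZ, hnZ⟩ := hs2
        simp only at hE hZ hnZ
        rcases hq hE with ⟨hq2, hZe⟩ | ⟨hq2, hZe⟩
        · -- looped
          subst hq2; subst hZe
          rcases ih s ν2 c' hr2 with ⟨hc1, hc2⟩ | ⟨a, ha, hc1, hcx, hcy⟩
          · refine Or.inl ⟨hc1, fun b => ?_⟩
            rw [hc2 b, hnZ b (Set.notMem_empty b), hν1 b]; ring
          · refine Or.inr ⟨a, List.mem_cons_of_mem s ha, hc1, hcx, ?_⟩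
            rw [hcy, hnZ (!clk) (Set.notMem_empty _), hν1]; ring
        · -- reset
          subst hq2; subst hZe
          have hx0 : ν2 clk = 0 := hZ clk rfl
          have hy0 : ν2 (!clk) = ν1 (!clk) := by
            refine hnZ (!clk) ?_
            rw [Set.mem_singleton_iff]
            cases clk <;> simp
          obtain ⟨hc1, hc2⟩ := loop_inv_u hq' rest s ν2 c' hr2
          refine Or.inr ⟨s, List.mem_cons_self, hc1, ?_, ?_⟩
          · rw [hc2 clk, hx0]; ring
          · rw [hc2 (!clk), hy0, hν1 (!clk)]; ring

lemma r2_only {M : ℝ} : ∀ ⦃γ : ACond Bool⦄ ⦃Z : Set Bool⦄ ⦃q'' : St⦄,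
    (r2, dia, γ, q'', Z) ∈ threeSumE M → q'' = r2 ∧ Z = (∅ : Set Bool) := by
  intro γ Z q'' h
  simp [threeSumE, Prod.mk.injEq] at h
  tauto

lemma v_inv {M : ℝ} (L : List ℝ) :
    ∀ (prev : ℝ) (ν : Bool → ℝ) (c' : St × (Bool → ℝ)),
      (threeSumAut M).RunFrom (vFrom prev L) (r1, ν) c' →
      c'.1 = r1 ∨
        (c'.1 = r2 ∧ ∃ cv ∈ L, ν false + ν true + 2 * (prev - cv) = 4 * M) := by
  induction L with
  | nil =>
    intro prev ν c' hrun
    cases hrun; exact Or.inl rfl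
  | cons s rest ih =>
    intro prev ν c' hrun
    cases hrun with
    | cons hs1 hr1 =>
      cases hr1 with
      | cons hs2 hr2 =>
        rename_i c1 c2
        obtain ⟨s1, ν1⟩ := c1
        obtain ⟨hq1, hν1⟩ := hs1
        simp only at hq1 hν1
        subst hq1
        obtain ⟨s2, ν2⟩ := c2
        obtain ⟨γ, Z, hE, hsat, hZ, hnZ⟩ := hs2
        simp only at hE hZ hnZ hsat
        simp only [threeSumAut] at hE
        simp [threeSumE, Prod.mk.injEq] at hE
        rcases hE with ⟨hγ, hq2, hZe⟩ | ⟨hγ, hq2, hZe⟩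
        · -- r1 loop
          subst hq2; subst hZe
          have hν2 : ∀ b, ν2 b = ν1 b := fun b => hnZ b (Set.notMem_empty b)
          rcases ih s ν2 c' hr2 with hc | ⟨hc, cv, hcv, hsum⟩
          · exact Or.inl hc
          · refine Or.inr ⟨hc, cv, List.mem_cons_of_mem s hcv, ?_⟩
            rw [hν2 false, hν2 true, hν1 false, hν1 true] at hsum
            linarith
        · -- r1 → r2 check
          subst hq2; subst hZe; subst hγ
          have hsum : ν1 true + ν1 false = 4 * M := by
            have h2 : ∑ x : Bool, ν1 x = 4 * M := by simpa [ACond.sat] using hsat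
            rwa [Fintype.sum_bool] at h2
          have hfin := loop_inv_v (M := M) (q := r2) r2_only rest s ν2 c' hr2
          refine Or.inr ⟨hfin, s, List.mem_cons_self, ?_⟩
          rw [hν1 true, hν1 false] at hsum
          linarith

lemma spade_inv_p2 {M : ℝ} {ν : Bool → ℝ} {c' : St × (Bool → ℝ)}
    (h : (threeSumAut M).Step (.inl spade) (p2, ν) c') :
    c'.1 = St.q1 ∧ c'.2 true = 0 ∧ c'.2 false = ν false := by
  obtain ⟨γ, Z, hE, _, hZ, hnZ⟩ := h
  simp only [threeSumAut] at hE
  simp [threeSumE, Prod.mk.injEq] at hE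
  obtain ⟨hγ, hq, hZe⟩ := hE
  subst hZe
  exact ⟨hq, hZ true rfl, hnZ false (by simp)⟩

lemma spade_inv_q2 {M : ℝ} {ν : Bool → ℝ} {c' : St × (Bool → ℝ)}
    (h : (threeSumAut M).Step (.inl spade) (q2, ν) c') :
    c'.1 = r1 ∧ ∀ b, c'.2 b = ν b := by
  obtain ⟨γ, Z, hE, _, hZ, hnZ⟩ := h
  simp only [threeSumAut] at hE
  simp [threeSumE, Prod.mk.injEq] at hE
  obtain ⟨hγ, hq, hZe⟩ := hE
  subst hZe
  exact ⟨hq, fun b => hnZ b (Set.notMem_empty b)⟩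

lemma spade_inv_p1 {M : ℝ} {ν : Bool → ℝ} {c' : St × (Bool → ℝ)}
    (h : (threeSumAut M).Step (.inl spade) (p1, ν) c') : False := by
  obtain ⟨γ, Z, hE, _, _, _⟩ := h
  simp only [threeSumAut] at hE
  simp [threeSumE, Prod.mk.injEq] at hE

lemma spade_inv_q1 {M : ℝ} {ν : Bool → ℝ} {c' : St × (Bool → ℝ)}
    (h : (threeSumAut M).Step (.inl spade) (St.q1, ν) c') : False := by
  obtain ⟨γ, Z, hE, _, _, _⟩ := h
  simp only [threeSumAut] at hE
  simp [threeSumE, Prod.mk.injEq] at hE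

lemma p1_dia {M : ℝ} : ∀ ⦃γ : ACond Bool⦄ ⦃Z : Set Bool⦄ ⦃q'' : St⦄,
    (p1, dia, γ, q'', Z) ∈ threeSumE M →
      (q'' = p1 ∧ Z = (∅ : Set Bool)) ∨ (q'' = p2 ∧ Z = ({false} : Set Bool)) := by
  intro γ Z q'' h
  simp [threeSumE, Prod.mk.injEq] at h
  tauto

lemma p2_dia {M : ℝ} : ∀ ⦃γ : ACond Bool⦄ ⦃Z : Set Bool⦄ ⦃q'' : St⦄,
    (p2, dia, γ, q'', Z) ∈ threeSumE M → q'' = p2 ∧ Z = (∅ : Set Bool) := by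
  intro γ Z q'' h
  simp [threeSumE, Prod.mk.injEq] at h
  tauto

lemma q1_dia {M : ℝ} : ∀ ⦃γ : ACond Bool⦄ ⦃Z : Set Bool⦄ ⦃q'' : St⦄,
    (St.q1, dia, γ, q'', Z) ∈ threeSumE M →
      (q'' = St.q1 ∧ Z = (∅ : Set Bool)) ∨ (q'' = St.q2 ∧ Z = ({true} : Set Bool)) := by
  intro γ Z q'' h
  simp [threeSumE, Prod.mk.injEq] at h
  tauto

lemma q2_dia {M : ℝ} : ∀ ⦃γ : ACond Bool⦄ ⦃Z : Set Bool⦄ ⦃q'' : St⦄,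
    (St.q2, dia, γ, q'', Z) ∈ threeSumE M → q'' = St.q2 ∧ Z = (∅ : Set Bool) := by
  intro γ Z q'' h
  simp [threeSumE, Prod.mk.injEq] at h
  tauto

end Aux

/-- Correctness of the 3SUM reduction: for `S = {s_1 < … < s_n}` (positive
reals, given as the sorted list `l`), `M = 1 + s_n`,
`u = 2(M − s_n) ♦ … ♦ 2(s_2 − s_1) ♦ 2s_1` and
`v = (M − s_n) ♦ … ♦ (s_2 − s_1) ♦`, the 3SUM automaton accepts
`w = u ♠ u ♠ v` iff there are `a, b, c ∈ S` with `a + b = c`. -/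
theorem stmt16 (l : List ℝ) (hne : l ≠ []) (hsort : l.Pairwise (· < ·))
    (hpos : ∀ x ∈ l, 0 < x) :
    (threeSumAut (1 + l.getLast hne)).Accepts
        (uFrom (1 + l.getLast hne) l.reverse ++ [Sum.inl Sig.spade] ++
          uFrom (1 + l.getLast hne) l.reverse ++ [Sum.inl Sig.spade] ++
          vFrom (1 + l.getLast hne) l.reverse) ↔
      ∃ a ∈ l, ∃ b ∈ l, ∃ c ∈ l, a + b = c := by
  classical
  set Mv := 1 + l.getLast hne with hMv
  set L := l.reverse with hL
  constructor
  · rintro ⟨q0, hq0, cfin, hrun, hfin⟩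
    obtain rfl : q0 = St.p1 := hq0
    rw [runFrom_append] at hrun
    obtain ⟨c4, hrun4, hrunv⟩ := hrun
    rw [runFrom_append] at hrun4
    obtain ⟨c3, hrun3, hsp2⟩ := hrun4
    rw [runFrom_append] at hrun3
    obtain ⟨c2, hrun2, hrunu2⟩ := hrun3
    rw [runFrom_append] at hrun2
    obtain ⟨c1, hrunu1, hsp1⟩ := hrun2
    -- first u from p1
    rcases u_inv p1_dia p2_dia L Mv (fun _ => 0) c1 hrunu1 with ⟨hc1, _⟩ | ⟨a, ha, hc1, hax, hay⟩
    · obtain ⟨s1, ν1⟩ := c1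
      simp only at hc1; subst hc1
      cases hsp1 with
      | cons hst hnil => exact absurd hst spade_inv_p1
    obtain ⟨s1, ν1⟩ := c1
    simp only at hc1 hax hay; subst hc1
    -- first spade
    cases hsp1 with
    | cons hst hnil =>
      cases hnil
      obtain ⟨hc2, hc2t, hc2f⟩ := spade_inv_p2 hst
      obtain ⟨s2, ν2⟩ := c2
      simp only at hc2 hc2t hc2f; subst hc2
      -- second u from q1
      rcases u_inv q1_dia q2_dia L Mv ν2 c3 hrunu2 with ⟨hc3, _⟩ | ⟨b, hb, hc3, hbx, hby⟩
      · obtain ⟨s3, ν3⟩ := c3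
        simp only at hc3; subst hc3
        cases hsp2 with
        | cons hst2 hnil2 => exact absurd hst2 spade_inv_q1
      obtain ⟨s3, ν3⟩ := c3
      simp only at hc3 hbx hby; subst hc3
      -- second spade
      cases hsp2 with
      | cons hst2 hnil2 =>
        cases hnil2
        obtain ⟨hc4, hc4v⟩ := spade_inv_q2 hst2
        obtain ⟨s4, ν4⟩ := c4
        simp only at hc4 hc4v; subst hc4
        -- v from r1
        rcases v_inv L Mv ν4 cfin hrunv with hc | ⟨_, cv, hcv, hsum⟩
        · have hfin' : cfin.1 = St.r2 := hfin
          rw [hfin'] at hc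
          exact absurd hc (by simp)
        · have h4f : ν4 false = ν3 false := hc4v false
          have h4t : ν4 true = ν3 true := hc4v true
          have h3t : ν3 true = 2 * b := hbx
          have h3f : ν3 false = ν2 false + 2 * Mv := by simpa using hby
          have h2f : ν2 false = ν1 false := hc2f
          have h1f : ν1 false = 2 * a := hax
          refine ⟨a, List.mem_reverse.mp ha, b, List.mem_reverse.mp hb, cv,
            List.mem_reverse.mp hcv, ?_⟩
          rw [h4f, h4t, h3t, h3f, h2f, h1f] at hsum
          linarith
  · rintro ⟨a, ha, b, hb, c, hc, habc⟩
    have t1 : (St.p1, Sig.dia, ACond.tt, St.p1, (∅ : Set Bool)) ∈ threeSumE Mv := by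
      simp [threeSumE]
    have t2 : (St.p1, Sig.dia, ACond.tt, St.p2, ({false} : Set Bool)) ∈ threeSumE Mv := by
      simp [threeSumE]
    have t3 : (St.p2, Sig.dia, ACond.tt, St.p2, (∅ : Set Bool)) ∈ threeSumE Mv := by
      simp [threeSumE]
    have t4 : (St.q1, Sig.dia, ACond.tt, St.q1, (∅ : Set Bool)) ∈ threeSumE Mv := by
      simp [threeSumE]
    have t5 : (St.q1, Sig.dia, ACond.tt, St.q2, ({true} : Set Bool)) ∈ threeSumE Mv := by
      simp [threeSumE]
    have t6 : (St.q2, Sig.dia, ACond.tt, St.q2, (∅ : Set Bool)) ∈ threeSumE Mv := by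
      simp [threeSumE]
    have t7 : (St.p2, Sig.spade, ACond.tt, St.q1, ({true} : Set Bool)) ∈ threeSumE Mv := by
      simp [threeSumE]
    have t8 : (St.q2, Sig.spade, ACond.tt, St.r1, (∅ : Set Bool)) ∈ threeSumE Mv := by
      simp [threeSumE]
    have run1 := u_run_reset t1 t2 t3 L Mv (fun _ => 0) a (List.mem_reverse.mpr ha)
    set ν1 : Bool → ℝ := fun bt => if bt = false then 2 * a else (fun _ => (0:ℝ)) bt + 2 * Mv
      with hν1
    set ν2 : Bool → ℝ := fun bt => if bt = true then 0 else ν1 bt with hν2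
    have step1 : (threeSumAut Mv).Step (.inl Sig.spade) (St.p2, ν1) (St.q1, ν2) := by
      refine ⟨ACond.tt, {true}, t7, trivial, ?_, ?_⟩
      · intro x hx
        rw [Set.mem_singleton_iff] at hx
        simp [hν2, hx]
      · intro x hx
        rw [Set.mem_singleton_iff] at hx
        simp [hν2, hx]
    have run2 := u_run_reset t4 t5 t6 L Mv ν2 b (List.mem_reverse.mpr hb)
    set ν3 : Bool → ℝ := fun bt => if bt = true then 2 * b else ν2 bt + 2 * Mv with hν3
    have step2 : (threeSumAut Mv).Step (.inl Sig.spade) (St.q2, ν3) (St.r1, ν3) :=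
      ⟨ACond.tt, ∅, t8, trivial, fun _ hx => hx.elim, fun _ _ => rfl⟩
    have hsum : ν3 false + ν3 true + 2 * (Mv - c) = 4 * Mv := by
      simp [hν3, hν2, hν1]
      linarith
    obtain ⟨νf, run3⟩ := v_run_check L Mv ν3 c (List.mem_reverse.mpr hc) hsum
    refine ⟨St.p1, rfl, (St.r2, νf), ?_, rfl⟩
    rw [runFrom_append]
    refine ⟨(St.r1, ν3), ?_, run3⟩
    rw [runFrom_append]
    refine ⟨(St.q2, ν3), ?_, .cons step2 (.nil _)⟩
    rw [runFrom_append]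
    refine ⟨(St.q1, ν2), ?_, run2⟩
    rw [runFrom_append]
    exact ⟨(St.p2, ν1), run1, .cons step1 (.nil _)⟩
end
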